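/- arXiv:2505.09078 — 5 statements merged into one kernel-verified Lean document; each statement's English description precedes it below -/
import Mathlib

section
/- Let h : ℝⁿ → ℝ be continuously differentiable, x, d ∈ ℝⁿ, 𝓗 a symmetric positive definite n×n real matrix, ρ ∈ (0,1), ν ∈ (0,1), and α ∈ (−1, 1/ρ − 1). If ⟨∇h(x), d⟩ = −(1/(1+α))·⟨d, 𝓗 d⟩, then there exists a nonnegative integer i such that h(x + νⁱ d) ≤ h(x) − ρ νⁱ ⟨d, 𝓗 d⟩ (so the backtracking Armijo line search of HAP-PRS-SQP terminates). -/
open scoped RealInnerProductSpace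
open Filter

noncomputable section

abbrev Euc (n : ℕ) : Type := EuclideanSpace ℝ (Fin n)

/-- Augmented Lagrangian `L_β`. -/
def Lbeta {n₁ n₂ : ℕ} (f : Euc n₁ → ℝ) (g : Euc n₂ → ℝ)
    (A : Euc n₁ →L[ℝ] Euc n₂) (β : ℝ) (x : Euc n₁) (y lam : Euc n₂) : ℝ :=
  f x + g y - ⟪lam, A x - y⟫ + (β / 2) * ‖A x - y‖ ^ 2

/-- `𝓗ᵏₓ = Hₖˣ + β AᵀA + ℓ I`. -/
def calHx {n₁ n₂ : ℕ} (A : Euc n₁ →L[ℝ] Euc n₂) (β l : ℝ)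
    (H : Euc n₁ →L[ℝ] Euc n₁) : Euc n₁ →L[ℝ] Euc n₁ :=
  H + β • ((ContinuousLinearMap.adjoint A).comp A) + l • (1 : Euc n₁ →L[ℝ] Euc n₁)

/-- `𝓗ᵏy = Hₖʸ + (β+σ) I`. -/
def calHy {n₂ : ℕ} (β σ : ℝ) (H : Euc n₂ →L[ℝ] Euc n₂) : Euc n₂ →L[ℝ] Euc n₂ :=
  H + (β + σ) • (1 : Euc n₂ →L[ℝ] Euc n₂)

/-- Merit function `L̂_β`. -/
def Lhat {n₁ n₂ : ℕ} (f : Euc n₁ → ℝ) (g : Euc n₂ → ℝ)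
    (A : Euc n₁ →L[ℝ] Euc n₂) (β r s Lg η2y α : ℝ)
    (x : Euc n₁) (y lam d : Euc n₂) : ℝ :=
  Lbeta f g A β x y lam
    + (6 / (|r + s| * β)) * (Lg ^ 2 + β ^ 2 + (η2y / (1 + α)) ^ 2) * ‖d‖ ^ 2

/-- Norm of the full gradient of `L̂_β`, as the sum of the norms of its four block gradients. -/
def gradLhatNorm {n₁ n₂ : ℕ} (f : Euc n₁ → ℝ) (g : Euc n₂ → ℝ)
    (A : Euc n₁ →L[ℝ] Euc n₂) (β r s Lg η2y α : ℝ)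
    (x : Euc n₁) (y lam d : Euc n₂) : ℝ :=
  ‖gradient (fun x' => Lhat f g A β r s Lg η2y α x' y lam d) x‖
    + ‖gradient (fun y' => Lhat f g A β r s Lg η2y α x y' lam d) y‖
    + ‖gradient (fun l' => Lhat f g A β r s Lg η2y α x y l' d) lam‖
    + ‖gradient (fun d' => Lhat f g A β r s Lg η2y α x y lam d') d‖

/-- the backtracking Armijo line search terminates. -/
theorem stmt2 {n : ℕ} (h : Euc n → ℝ) (hh : ContDiff ℝ 1 h)
    (x d : Euc n) (H : Euc n →L[ℝ] Euc n) (hH : IsSelfAdjoint H)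
    (hpos : ∀ v : Euc n, v ≠ 0 → 0 < ⟪v, H v⟫)
    (ρ ν : ℝ) (hρ : ρ ∈ Set.Ioo (0:ℝ) 1) (hν : ν ∈ Set.Ioo (0:ℝ) 1)
    (α : ℝ) (hα : α ∈ Set.Ioo (-1 : ℝ) (1 / ρ - 1))
    (hdir : ⟪gradient h x, d⟫ = -(1 / (1 + α)) * ⟪d, H d⟫) :
    ∃ i : ℕ, h (x + ν ^ i • d) ≤ h x - ρ * ν ^ i * ⟪d, H d⟫ := by
  rcases eq_or_ne d 0 with rfl | hd
  · exact ⟨0, by simp⟩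
  set Q : ℝ := ⟪d, H d⟫ with hQ
  have hQpos : 0 < Q := hpos d hd
  have hα1 : 0 < 1 + α := by have := hα.1; linarith
  have hρα : ρ < 1 / (1 + α) := by
    rw [lt_div_iff₀ hα1]
    have h2 : 1 + α < 1 / ρ := by have := hα.2; linarith
    calc ρ * (1 + α) < ρ * (1 / ρ) := by
          exact mul_lt_mul_of_pos_left h2 hρ.1
      _ = 1 := mul_one_div_cancel (ne_of_gt hρ.1)
  -- the directional derivative
  have hgrad : (fderiv ℝ h x) d = ⟪gradient h x, d⟫ := by
    rw [gradient]
    exact (InnerProductSpace.toDual_symm_apply).symm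
  set φ : ℝ → ℝ := fun t => h (x + t • d) with hφdef
  have hline : HasDerivAt (fun t : ℝ => x + t • d) d 0 :=
    ((hasDerivAt_id (0:ℝ)).smul_const d).const_add x |>.congr_deriv (one_smul ℝ d)
  have hφ : HasDerivAt φ (fderiv ℝ h x d) 0 := by
    have hdiff := (hh.differentiable one_ne_zero (x + (0:ℝ) • d)).hasFDerivAt
    have := hdiff.comp_hasDerivAt 0 hline
    simp only [zero_smul, add_zero] at this
    exact this
  have hDlt : fderiv ℝ h x d < -(ρ * Q) := by
    rw [hgrad, hdir]
    have : ρ * Q < (1 / (1 + α)) * Q := mul_lt_mul_of_pos_right hρα hQpos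
    linarith
  have hslope := hasDerivAt_iff_tendsto_slope.mp hφ
  have hslope' : Tendsto (slope φ 0) (nhdsWithin 0 (Set.Ioi 0)) (nhds (fderiv ℝ h x d)) :=
    hslope.mono_left (nhdsWithin_mono _ (fun t ht => ne_of_gt ht))
  have hev2 : ∀ᶠ t in nhdsWithin 0 (Set.Ioi (0:ℝ)), slope φ 0 t < -(ρ * Q) :=
    hslope'.eventually_lt_const hDlt
  have hpow : Tendsto (fun i : ℕ => ν ^ i) atTop (nhdsWithin 0 (Set.Ioi (0:ℝ))) := by
    apply tendsto_nhdsWithin_of_tendsto_nhds_of_eventually_within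
    · exact tendsto_pow_atTop_nhds_zero_of_lt_one (le_of_lt hν.1) hν.2
    · exact Filter.Eventually.of_forall fun i => pow_pos hν.1 i
  have hfin : ∀ᶠ i : ℕ in atTop, slope φ 0 (ν ^ i) < -(ρ * Q) := hpow.eventually hev2
  obtain ⟨i, hi⟩ := hfin.exists
  refine ⟨i, ?_⟩
  have hti : (0:ℝ) < ν ^ i := pow_pos hν.1 i
  have hs : slope φ 0 (ν ^ i) = (φ (ν ^ i) - φ 0) / (ν ^ i) := by
    simp [slope_def_field, div_eq_inv_mul]
  rw [hs] at hi
  have := (div_lt_iff₀ hti).mp hi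
  have hφ0 : φ 0 = h x := by simp [hφdef]
  have hφi : φ (ν ^ i) = h (x + ν ^ i • d) := rfl
  rw [hφ0, hφi] at this
  nlinarith

end
end

section
/- Let h : ℝⁿ → ℝ be continuously differentiable with ∇h L-Lipschitz on the segment {x + t d : t ∈ [0,1]} for some L > 0, let 𝓗 be a symmetric n×n matrix with ⟨v, 𝓗 v⟩ ≥ η‖v‖² for all v where η > 0, let ρ ∈ (0,1) and α ∈ (−1, 1/ρ − 1), and suppose ⟨∇h(x), d⟩ = −(1/(1+α))·⟨d, 𝓗 d⟩. Then for every t ∈ [0, min{1, ((1/(1+α)) − ρ)η / L}], h(x + t d) ≤ h(x) − ρ t ⟨d, 𝓗 d⟩. -/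
open scoped RealInnerProductSpace
open Filter

noncomputable section

/-- quantified Armijo decrease along the search direction. -/
theorem stmt5 {n : ℕ} (h : Euc n → ℝ) (hh : ContDiff ℝ 1 h)
    (x d : Euc n) (L : ℝ) (hL : 0 < L)
    (hLip : ∀ t₁ ∈ Set.Icc (0:ℝ) 1, ∀ t₂ ∈ Set.Icc (0:ℝ) 1,
        ‖gradient h (x + t₁ • d) - gradient h (x + t₂ • d)‖
        ≤ L * ‖(x + t₁ • d) - (x + t₂ • d)‖)
    (H : Euc n →L[ℝ] Euc n) (hH : IsSelfAdjoint H)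
    (η : ℝ) (hη : 0 < η) (hHlb : ∀ v : Euc n, η * ‖v‖ ^ 2 ≤ ⟪v, H v⟫)
    (ρ : ℝ) (hρ : ρ ∈ Set.Ioo (0:ℝ) 1)
    (α : ℝ) (hα : α ∈ Set.Ioo (-1 : ℝ) (1 / ρ - 1))
    (hdir : ⟪gradient h x, d⟫ = -(1 / (1 + α)) * ⟪d, H d⟫) :
    ∀ t ∈ Set.Icc (0:ℝ) (min 1 ((1 / (1 + α) - ρ) * η / L)),
      h (x + t • d) ≤ h x - ρ * t * ⟪d, H d⟫ := by
  intro t ht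
  obtain ⟨ht0, htm⟩ := ht
  have ht1 : t ≤ 1 := le_trans htm (min_le_left _ _)
  have h1pα : (0:ℝ) < 1 + α := by linarith [hα.1]
  have hρ0 := hρ.1
  have hCρ : ρ < 1 / (1 + α) := by
    rw [lt_div_iff₀ h1pα]
    have h2 : 1 + α < 1 / ρ := by linarith [hα.2]
    calc ρ * (1 + α) < ρ * (1 / ρ) := by exact mul_lt_mul_of_pos_left h2 hρ0
      _ = 1 := by field_simp
  have htL : L * t ≤ (1 / (1 + α) - ρ) * η := by
    have := le_trans htm (min_le_right _ _)
    rw [le_div_iff₀ hL] at this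
    linarith
  -- derivative of the restriction to the line
  have hφ : ∀ s : ℝ, HasDerivAt (fun s : ℝ => h (x + s • d))
      ⟪gradient h (x + s • d), d⟫ s := by
    intro s
    have h1 : HasDerivAt (fun s : ℝ => x + s • d) d s := by
      simpa using ((hasDerivAt_id s).smul_const d).const_add x
    have h2 := ((hh.differentiable one_ne_zero) (x + s • d)).hasGradientAt
    simpa [Function.comp_def] using h2.hasFDerivAt.comp_hasDerivAt s h1
  -- the auxiliary function with subtracted linear part
  set g1 : ℝ → ℝ := fun s => h (x + s • d) - s * ⟪gradient h x, d⟫ with hg1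
  have hg1d : ∀ s ∈ Set.Icc (0:ℝ) t, HasDerivWithinAt g1
      (⟪gradient h (x + s • d), d⟫ - ⟪gradient h x, d⟫) (Set.Icc 0 t) s := by
    intro s _
    have := ((hφ s).sub ((hasDerivAt_id s).mul_const (⟪gradient h x, d⟫ : ℝ))).hasDerivWithinAt (s := Set.Icc 0 t)
    simpa [hg1, Pi.sub_def] using this
  have hbound : ∀ s ∈ Set.Ico (0:ℝ) t,
      ‖⟪gradient h (x + s • d), d⟫ - ⟪gradient h x, d⟫‖ ≤ L * t * ‖d‖ ^ 2 := by
    intro s hs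
    have hs0 := hs.1
    have hst : s ≤ t := le_of_lt hs.2
    have hs1 : s ≤ 1 := le_trans hst ht1
    have hl := hLip s ⟨hs0, hs1⟩ 0 ⟨le_rfl, zero_le_one⟩
    have hx0 : x + (0:ℝ) • d = x := by simp
    rw [hx0] at hl
    have hnorm : ‖(x + s • d) - x‖ = s * ‖d‖ := by
      simp [norm_smul, abs_of_nonneg hs0]
    rw [hnorm] at hl
    have key : ‖⟪gradient h (x + s • d), d⟫ - ⟪gradient h x, d⟫‖
        ≤ ‖gradient h (x + s • d) - gradient h x‖ * ‖d‖ := by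
      rw [← inner_sub_left]
      exact norm_inner_le_norm _ _
    have hd2 : (0:ℝ) ≤ ‖d‖ := norm_nonneg d
    calc ‖⟪gradient h (x + s • d), d⟫ - ⟪gradient h x, d⟫‖
        ≤ ‖gradient h (x + s • d) - gradient h x‖ * ‖d‖ := key
      _ ≤ (L * (s * ‖d‖)) * ‖d‖ := by exact mul_le_mul_of_nonneg_right hl hd2
      _ ≤ L * t * ‖d‖ ^ 2 := by nlinarith [mul_le_mul_of_nonneg_right (mul_le_mul_of_nonneg_left hst hL.le) (sq_nonneg ‖d‖)]
  have hmvt := norm_image_sub_le_of_norm_deriv_le_segment' hg1d hbound t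
    ⟨ht0, le_rfl⟩
  have hg10 : g1 0 = h x := by simp [hg1]
  rw [hg10] at hmvt
  have htaylor : h (x + t • d) - t * ⟪gradient h x, d⟫ - h x ≤ L * t * ‖d‖ ^ 2 * (t - 0) := by
    calc h (x + t • d) - t * ⟪gradient h x, d⟫ - h x ≤ ‖g1 t - h x‖ := by
          rw [hg1]; exact le_abs_self _
      _ ≤ _ := hmvt
  have hQ : η * ‖d‖ ^ 2 ≤ ⟪d, H d⟫ := hHlb d
  have hQ0 : (0:ℝ) ≤ ⟪d, H d⟫ := le_trans (by positivity) hQ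
  rw [hdir] at htaylor
  -- final arithmetic
  nlinarith [mul_le_mul_of_nonneg_left hQ (mul_nonneg ht0 (sub_nonneg.2 hCρ.le)),
    mul_le_mul_of_nonneg_right htL (mul_nonneg ht0 (sq_nonneg ‖d‖)),
    mul_nonneg ht0 hQ0]


end
end

section
/- Let β > 0 and r, s ∈ ℝ with r + s ≠ 0, and let x₊ ∈ ℝ^{n₁}, y, y₊, λ, λ₊ ∈ ℝ^{n₂} satisfy λ₊ = λ − rβ(Ax₊ − y) − sβ(Ax₊ − y₊). Then Ax₊ − y = −(1/((r+s)β))(λ₊ − λ) − (s/(r+s))(y − y₊) and Ax₊ − y₊ = −(1/((r+s)β))(λ₊ − λ) + (r/(r+s))(y − y₊), and consequently sβ‖Ax₊ − y₊‖² + rβ‖Ax₊ − y‖² ≤ (1/(|r+s|β))‖λ₊ − λ‖² + (|rs|β/|r+s|)‖y₊ − y‖². -/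
open scoped RealInnerProductSpace
open Filter

noncomputable section

/-- dual-update algebra and the resulting bound. -/
theorem stmt7 {n₁ n₂ : ℕ}
    (A : Euc n₁ →L[ℝ] Euc n₂) (β : ℝ) (hβ : 0 < β)
    (r s : ℝ) (hrs : r + s ≠ 0)
    (xp : Euc n₁) (y yp lam lamp : Euc n₂)
    (hupd : lamp = lam - (r * β) • (A xp - y) - (s * β) • (A xp - yp)) :
    A xp - y = (-(1 / ((r + s) * β))) • (lamp - lam) - (s / (r + s)) • (y - yp) ∧
    A xp - yp = (-(1 / ((r + s) * β))) • (lamp - lam) + (r / (r + s)) • (y - yp) ∧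
    s * β * ‖A xp - yp‖ ^ 2 + r * β * ‖A xp - y‖ ^ 2
      ≤ (1 / (|r + s| * β)) * ‖lamp - lam‖ ^ 2 + (|r * s| * β / |r + s|) * ‖yp - y‖ ^ 2 := by
  have hβ' : β ≠ 0 := ne_of_gt hβ
  set u : Euc n₂ := A xp - y with hu
  set v : Euc n₂ := A xp - yp with hv
  have hΔ : lamp - lam = (-(r * β)) • u - (s * β) • v := by
    rw [hupd]; module
  have h1 : u = (-(1 / ((r + s) * β))) • (lamp - lam) - (s / (r + s)) • (y - yp) := by
    rw [hΔ]
    have hyv : y - yp = v - u := by rw [hu, hv]; module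
    rw [hyv]
    match_scalars <;> field_simp <;> ring
  have h2 : v = (-(1 / ((r + s) * β))) • (lamp - lam) + (r / (r + s)) • (y - yp) := by
    rw [hΔ]
    have hyv : y - yp = v - u := by rw [hu, hv]; module
    rw [hyv]
    match_scalars <;> field_simp <;> ring
  refine ⟨h1, h2, ?_⟩
  have hn1 : ‖lamp - lam‖ ^ 2
      = (r*β)^2 * ‖u‖^2 + 2*(r*β)*(s*β)*⟪u, v⟫ + (s*β)^2 * ‖v‖^2 := by
    rw [hΔ, ← real_inner_self_eq_norm_sq, ← real_inner_self_eq_norm_sq,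
      ← real_inner_self_eq_norm_sq]
    simp only [inner_sub_left, inner_sub_right, inner_smul_left, inner_smul_right,
      inner_neg_left, inner_neg_right, real_inner_comm v u, RCLike.ofReal_real_eq_id, id, RCLike.star_def, conj_trivial]
    ring
  have hn2 : ‖yp - y‖ ^ 2 = ‖u‖^2 - 2*⟪u, v⟫ + ‖v‖^2 := by
    have : yp - y = u - v := by rw [hu, hv]; module
    rw [this, ← real_inner_self_eq_norm_sq, ← real_inner_self_eq_norm_sq,
      ← real_inner_self_eq_norm_sq]
    simp only [inner_sub_left, inner_sub_right, real_inner_comm v u]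
    ring
  have key : s * β * ‖v‖ ^ 2 + r * β * ‖u‖ ^ 2
      = (1 / ((r + s) * β)) * ‖lamp - lam‖ ^ 2 + (r * s * β / (r + s)) * ‖yp - y‖ ^ 2 := by
    rw [hn1, hn2]; field_simp; ring
  rw [key]
  have hβa : |β| = β := abs_of_pos hβ
  gcongr ?_ + ?_
  · apply mul_le_mul_of_nonneg_right _ (sq_nonneg _)
    calc 1 / ((r + s) * β) ≤ |1 / ((r + s) * β)| := le_abs_self _
      _ = 1 / (|r + s| * β) := by rw [abs_div, abs_mul, hβa, abs_one]
  · apply mul_le_mul_of_nonneg_right _ (sq_nonneg _)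
    calc r * s * β / (r + s) ≤ |r * s * β / (r + s)| := le_abs_self _
      _ = |r * s| * β / |r + s| := by rw [abs_div, abs_mul, hβa]

end
end

section
/- Suppose the HAP-PRS-SQP relations (a)–(f) hold for all k, ∇g is L_g-Lipschitz on a compact convex set containing all y_k and all segments [y_k, y_k + d_k^y], and ‖𝓗_k^y‖ ≤ η₂^y for all k. Then for every k ≥ 1, ‖λ_{k+1} − λ_k‖ ≤ L_g‖y_k − y_{k−1}‖ + |1−s|β‖A(x_{k+1} − x_k)‖ + |s|β‖y_{k+1} − y_k‖ + β‖y_k − y_{k−1}‖ + (η₂^y/(1+α))‖d_k^y‖ + (η₂^y/(1+α))‖d_{k−1}^y‖, and consequently (1/6)‖λ_{k+1} − λ_k‖² ≤ (L_g² + β²)‖d_{k−1}^y‖² + (1−s)²β²λ_max(AᵀA)‖d_k^x‖² + s²β²‖d_k^y‖² + (η₂^y/(1+α))²‖d_k^y‖² + (η₂^y/(1+α))²‖d_{k−1}^y‖². -/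
open scoped RealInnerProductSpace
open Filter

noncomputable section

private lemma six_sq (a b c d e f : ℝ) :
    (a + b + c + d + e + f) ^ 2 ≤ 6 * (a^2 + b^2 + c^2 + d^2 + e^2 + f^2) := by
  nlinarith [sq_nonneg (a-b), sq_nonneg (a-c), sq_nonneg (a-d), sq_nonneg (a-e),
    sq_nonneg (a-f), sq_nonneg (b-c), sq_nonneg (b-d), sq_nonneg (b-e), sq_nonneg (b-f),
    sq_nonneg (c-d), sq_nonneg (c-e), sq_nonneg (c-f), sq_nonneg (d-e), sq_nonneg (d-f),
    sq_nonneg (e-f)]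

private lemma norm_add6_le {E : Type*} [SeminormedAddCommGroup E] (a b c d e f : E) :
    ‖a + b + c + d + e + f‖ ≤ ‖a‖ + ‖b‖ + ‖c‖ + ‖d‖ + ‖e‖ + ‖f‖ := by
  calc ‖a + b + c + d + e + f‖ ≤ ‖a + b + c + d + e‖ + ‖f‖ := norm_add_le _ _
    _ ≤ (‖a + b + c + d‖ + ‖e‖) + ‖f‖ := by gcongr; exact norm_add_le _ _
    _ ≤ ((‖a + b + c‖ + ‖d‖) + ‖e‖) + ‖f‖ := by gcongr; exact norm_add_le _ _
    _ ≤ (((‖a + b‖ + ‖c‖) + ‖d‖) + ‖e‖) + ‖f‖ := by gcongr; exact norm_add_le _ _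
    _ ≤ ‖a‖ + ‖b‖ + ‖c‖ + ‖d‖ + ‖e‖ + ‖f‖ := by gcongr; exact norm_add_le _ _

set_option maxHeartbeats 1000000 in
/-- bounds on successive multiplier differences (stated for `k ≥ 1`,
reindexed as `k + 1`). -/
theorem stmt9 {n₁ n₂ : ℕ}
    (f : Euc n₁ → ℝ) (g : Euc n₂ → ℝ) (hf : ContDiff ℝ 1 f) (hg : ContDiff ℝ 1 g)
    (A : Euc n₁ →L[ℝ] Euc n₂) (β : ℝ) (hβ : 0 < β)
    (ν ρ : ℝ) (hν : ν ∈ Set.Ioo (0:ℝ) 1) (hρ : ρ ∈ Set.Ioo (0:ℝ) 1)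
    (α : ℝ) (hα : α ∈ Set.Ioo (-1 : ℝ) (1 / ρ - 1))
    (l σ : ℝ) (hl : 0 < l) (hσ : 0 < σ)
    (r s : ℝ) (hrs : r + s ≠ 0)
    (x xt : ℕ → Euc n₁) (y yt : ℕ → Euc n₂) (lam lamh : ℕ → Euc n₂)
    (Hx : ℕ → Euc n₁ →L[ℝ] Euc n₁) (Hy : ℕ → Euc n₂ →L[ℝ] Euc n₂)
    (hHxsym : ∀ k, IsSelfAdjoint (Hx k)) (hHysym : ∀ k, IsSelfAdjoint (Hy k))
    (hHxpos : ∀ k, ∀ v : Euc n₁, v ≠ 0 → 0 < ⟪v, calHx A β l (Hx k) v⟫)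
    (hHypos : ∀ k, ∀ v : Euc n₂, v ≠ 0 → 0 < ⟪v, calHy β σ (Hy k) v⟫)
    (tx ty : ℕ → ℝ) (htx : ∀ k, tx k ∈ Set.Ioc (0:ℝ) 1) (hty : ∀ k, ty k ∈ Set.Ioc (0:ℝ) 1)
    (dx : ℕ → Euc n₁) (dy : ℕ → Euc n₂)
    (hdx : ∀ k, dx k = (1 + α) • (xt (k+1) - x k))
    (hdy : ∀ k, dy k = (1 + α) • (yt (k+1) - y k))
    (ha : ∀ k, gradient f (x k)
        - (ContinuousLinearMap.adjoint A) (lam k - β • (A (x k) - y k))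
        + calHx A β l (Hx k) (xt (k+1) - x k) = 0)
    (hbx : ∀ k, x (k+1) = x k + tx k • dx k)
    (hc : ∀ k, lamh k = lam k - (r * β) • (A (x (k+1)) - y k))
    (hdg : ∀ k, gradient g (y k) - (lamh k - β • (A (x (k+1)) - y k))
        + calHy β σ (Hy k) (yt (k+1) - y k) = 0)
    (hby : ∀ k, y (k+1) = y k + ty k • dy k)
    (hlamupd : ∀ k, lam (k+1) = lamh k - (s * β) • (A (x (k+1)) - y (k+1)))
    (Lg : ℝ) (hLg : 0 < Lg)
    (hgLip : ∀ k, ∀ t₁ ∈ Set.Icc (0:ℝ) 1, ∀ t₂ ∈ Set.Icc (0:ℝ) 1,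
        ‖gradient g (y k + t₁ • dy k) - gradient g (y k + t₂ • dy k)‖
        ≤ Lg * ‖(y k + t₁ • dy k) - (y k + t₂ • dy k)‖)
    (lamMaxAtA : ℝ) (hlamMaxAtA0 : 0 ≤ lamMaxAtA)
    (hlamMaxAtA : ∀ v : Euc n₁, ‖A v‖ ^ 2 ≤ lamMaxAtA * ‖v‖ ^ 2)
    (η2y : ℝ) (hη2ynorm : ∀ k, ‖calHy β σ (Hy k)‖ ≤ η2y) :
    ∀ k : ℕ,
      ‖lam (k+2) - lam (k+1)‖
        ≤ Lg * ‖y (k+1) - y k‖ + |1 - s| * β * ‖A (x (k+2) - x (k+1))‖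
          + |s| * β * ‖y (k+2) - y (k+1)‖ + β * ‖y (k+1) - y k‖
          + (η2y / (1 + α)) * ‖dy (k+1)‖ + (η2y / (1 + α)) * ‖dy k‖ ∧
      (1 / 6) * ‖lam (k+2) - lam (k+1)‖ ^ 2
        ≤ (Lg ^ 2 + β ^ 2) * ‖dy k‖ ^ 2
          + (1 - s) ^ 2 * β ^ 2 * lamMaxAtA * ‖dx (k+1)‖ ^ 2
          + s ^ 2 * β ^ 2 * ‖dy (k+1)‖ ^ 2
          + (η2y / (1 + α)) ^ 2 * ‖dy (k+1)‖ ^ 2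
          + (η2y / (1 + α)) ^ 2 * ‖dy k‖ ^ 2 := by
  have hα1 : (0:ℝ) < 1 + α := by have := hα.1; linarith
  have hη0 : 0 ≤ η2y := le_trans (norm_nonneg _) (hη2ynorm 0)
  have hlamh : ∀ j : ℕ, lamh j = gradient g (y j) + β • (A (x (j+1)) - y j)
      + calHy β σ (Hy j) (yt (j+1) - y j) := by
    intro j
    have h := hdg j
    have h2 : (gradient g (y j) + β • (A (x (j+1)) - y j)
        + calHy β σ (Hy j) (yt (j+1) - y j)) - lamh j = 0 := by
      rw [← h]; abel
    exact (sub_eq_zero.mp h2).symm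
  have hlam : ∀ j : ℕ, lam (j+1) = gradient g (y j) + β • (A (x (j+1)) - y j)
      + calHy β σ (Hy j) (yt (j+1) - y j) - (s * β) • (A (x (j+1)) - y (j+1)) := by
    intro j; rw [hlamupd j, hlamh j]
  have hyd : ∀ j : ℕ, yt (j+1) - y j = (1+α)⁻¹ • dy j := by
    intro j
    rw [hdy j, smul_smul, inv_mul_cancel₀ (ne_of_gt hα1), one_smul]
  have hC : ∀ j : ℕ, ‖calHy β σ (Hy j) (yt (j+1) - y j)‖ ≤ (η2y / (1+α)) * ‖dy j‖ := by
    intro j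
    rw [hyd j]
    calc ‖calHy β σ (Hy j) ((1+α)⁻¹ • dy j)‖
        ≤ ‖calHy β σ (Hy j)‖ * ‖(1+α)⁻¹ • dy j‖ := (calHy β σ (Hy j)).le_opNorm _
      _ = ‖calHy β σ (Hy j)‖ * ((1+α)⁻¹ * ‖dy j‖) := by
          rw [norm_smul, Real.norm_eq_abs, abs_of_pos (inv_pos.mpr hα1)]
      _ ≤ η2y * ((1+α)⁻¹ * ‖dy j‖) := by
          refine mul_le_mul_of_nonneg_right (hη2ynorm j) ?_
          positivity
      _ = (η2y / (1+α)) * ‖dy j‖ := by ring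
  intro k
  have hD : lam (k+2) - lam (k+1)
      = (gradient g (y (k+1)) - gradient g (y k))
        + ((1 - s) * β) • (A (x (k+2) - x (k+1)))
        + (s * β) • (y (k+2) - y (k+1))
        + (-β) • (y (k+1) - y k)
        + calHy β σ (Hy (k+1)) (yt (k+2) - y (k+1))
        + (- calHy β σ (Hy k) (yt (k+1) - y k)) := by
    have hlam2 : lam (k+2) = gradient g (y (k+1)) + β • (A (x (k+2)) - y (k+1))
        + calHy β σ (Hy (k+1)) (yt (k+2) - y (k+1))
        - (s * β) • (A (x (k+2)) - y (k+2)) := hlam (k+1)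
    rw [hlam2, hlam k, map_sub A (x (k+2)) (x (k+1))]
    module
  have hG : ‖gradient g (y (k+1)) - gradient g (y k)‖ ≤ Lg * ‖y (k+1) - y k‖ := by
    have h := hgLip k (ty k) ⟨le_of_lt (hty k).1, (hty k).2⟩ 0 ⟨le_refl 0, zero_le_one⟩
    rw [zero_smul, add_zero, ← hby k] at h
    exact h
  have b2 : ‖((1 - s) * β) • (A (x (k+2) - x (k+1)))‖
      = |1 - s| * β * ‖A (x (k+2) - x (k+1))‖ := by
    rw [norm_smul, Real.norm_eq_abs, abs_mul, abs_of_pos hβ]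
  have b3 : ‖(s * β) • (y (k+2) - y (k+1))‖ = |s| * β * ‖y (k+2) - y (k+1)‖ := by
    rw [norm_smul, Real.norm_eq_abs, abs_mul, abs_of_pos hβ]
  have b4 : ‖(-β) • (y (k+1) - y k)‖ = β * ‖y (k+1) - y k‖ := by
    rw [norm_smul, Real.norm_eq_abs, abs_neg, abs_of_pos hβ]
  have b5 := hC (k+1)
  have b6 : ‖- calHy β σ (Hy k) (yt (k+1) - y k)‖ ≤ (η2y / (1+α)) * ‖dy k‖ := by
    rw [norm_neg]; exact hC k
  have key1 : ‖lam (k+2) - lam (k+1)‖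
      ≤ Lg * ‖y (k+1) - y k‖ + |1 - s| * β * ‖A (x (k+2) - x (k+1))‖
        + |s| * β * ‖y (k+2) - y (k+1)‖ + β * ‖y (k+1) - y k‖
        + (η2y / (1 + α)) * ‖dy (k+1)‖ + (η2y / (1 + α)) * ‖dy k‖ := by
    rw [hD]
    refine le_trans (norm_add6_le _ _ _ _ _ _) ?_
    linarith [hG, b2.le, b3.le, b4.le, b5, b6]
  refine ⟨key1, ?_⟩
  -- scalar abbreviations
  have hu : ‖y (k+1) - y k‖ ≤ ‖dy k‖ := by
    rw [hby k, add_sub_cancel_left, norm_smul, Real.norm_eq_abs, abs_of_pos (hty k).1]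
    exact mul_le_of_le_one_left (norm_nonneg _) (hty k).2
  have hv : ‖y (k+2) - y (k+1)‖ ≤ ‖dy (k+1)‖ := by
    rw [show y (k+2) = y (k+1) + ty (k+1) • dy (k+1) from hby (k+1),
      add_sub_cancel_left, norm_smul, Real.norm_eq_abs, abs_of_pos (hty (k+1)).1]
    exact mul_le_of_le_one_left (norm_nonneg _) (hty (k+1)).2
  have hxs : ‖x (k+2) - x (k+1)‖ ≤ ‖dx (k+1)‖ := by
    rw [show x (k+2) = x (k+1) + tx (k+1) • dx (k+1) from hbx (k+1),
      add_sub_cancel_left, norm_smul, Real.norm_eq_abs, abs_of_pos (htx (k+1)).1]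
    exact mul_le_of_le_one_left (norm_nonneg _) (htx (k+1)).2
  have hw2 : ‖A (x (k+2) - x (k+1))‖ ^ 2 ≤ lamMaxAtA * ‖dx (k+1)‖ ^ 2 :=
    le_trans (hlamMaxAtA _)
      (mul_le_mul_of_nonneg_left (pow_le_pow_left₀ (norm_nonneg _) hxs 2) hlamMaxAtA0)
  have hu2 : ‖y (k+1) - y k‖ ^ 2 ≤ ‖dy k‖ ^ 2 := pow_le_pow_left₀ (norm_nonneg _) hu 2
  have hv2 : ‖y (k+2) - y (k+1)‖ ^ 2 ≤ ‖dy (k+1)‖ ^ 2 :=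
    pow_le_pow_left₀ (norm_nonneg _) hv 2
  have hNS : ‖lam (k+2) - lam (k+1)‖ ^ 2
      ≤ (Lg * ‖y (k+1) - y k‖ + |1 - s| * β * ‖A (x (k+2) - x (k+1))‖
        + |s| * β * ‖y (k+2) - y (k+1)‖ + β * ‖y (k+1) - y k‖
        + (η2y / (1 + α)) * ‖dy (k+1)‖ + (η2y / (1 + α)) * ‖dy k‖) ^ 2 :=
    pow_le_pow_left₀ (norm_nonneg _) key1 2
  have hS6 := six_sq (Lg * ‖y (k+1) - y k‖) (|1 - s| * β * ‖A (x (k+2) - x (k+1))‖)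
    (|s| * β * ‖y (k+2) - y (k+1)‖) (β * ‖y (k+1) - y k‖)
    ((η2y / (1 + α)) * ‖dy (k+1)‖) ((η2y / (1 + α)) * ‖dy k‖)
  have h1 : Lg ^ 2 * ‖y (k+1) - y k‖ ^ 2 ≤ Lg ^ 2 * ‖dy k‖ ^ 2 :=
    mul_le_mul_of_nonneg_left hu2 (sq_nonneg Lg)
  have h2 : β ^ 2 * ‖y (k+1) - y k‖ ^ 2 ≤ β ^ 2 * ‖dy k‖ ^ 2 :=
    mul_le_mul_of_nonneg_left hu2 (sq_nonneg β)
  have h3 : |s| ^ 2 * β ^ 2 * ‖y (k+2) - y (k+1)‖ ^ 2 ≤ s ^ 2 * β ^ 2 * ‖dy (k+1)‖ ^ 2 := by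
    rw [sq_abs]
    exact mul_le_mul_of_nonneg_left hv2 (by positivity)
  have h4 : |1 - s| ^ 2 * β ^ 2 * ‖A (x (k+2) - x (k+1))‖ ^ 2
      ≤ (1 - s) ^ 2 * β ^ 2 * (lamMaxAtA * ‖dx (k+1)‖ ^ 2) := by
    rw [sq_abs]
    exact mul_le_mul_of_nonneg_left hw2 (by positivity)
  have t1 : (Lg * ‖y (k+1) - y k‖) ^ 2 ≤ Lg ^ 2 * ‖dy k‖ ^ 2 := by
    rw [mul_pow]; exact h1
  have t2 : (|1 - s| * β * ‖A (x (k+2) - x (k+1))‖) ^ 2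
      ≤ (1 - s) ^ 2 * β ^ 2 * (lamMaxAtA * ‖dx (k+1)‖ ^ 2) := by
    rw [mul_pow, mul_pow]; exact h4
  have t3 : (|s| * β * ‖y (k+2) - y (k+1)‖) ^ 2 ≤ s ^ 2 * β ^ 2 * ‖dy (k+1)‖ ^ 2 := by
    rw [mul_pow, mul_pow]; exact h3
  have t4 : (β * ‖y (k+1) - y k‖) ^ 2 ≤ β ^ 2 * ‖dy k‖ ^ 2 := by
    rw [mul_pow]; exact h2
  have t5 : ((η2y / (1 + α)) * ‖dy (k+1)‖) ^ 2 = (η2y / (1 + α)) ^ 2 * ‖dy (k+1)‖ ^ 2 := by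
    ring
  have t6 : ((η2y / (1 + α)) * ‖dy k‖) ^ 2 = (η2y / (1 + α)) ^ 2 * ‖dy k‖ ^ 2 := by
    ring
  linarith [hNS, hS6, t1, t2, t3, t4, t5.le, t6.le]

end
end

section
/- Suppose the HAP-PRS-SQP relations (a)–(f), the standing assumptions, and t_k^x, t_k^y ≥ γ hold, and suppose δ^x > 0 and δ^y > 0. Then every cluster point w* = (x*, y*, λ*) of {w_k}, where w_k := (x_k, y_k, λ_k), satisfies ∇f(x*) = Aᵀλ*, ∇g(y*) = λ* and Ax* = y*; i.e., every cluster point is a stationary point of L_β, so (x*, y*) is a KKT point of min{f(x) + g(y) : Ax = y} with multiplier λ*. -/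
open scoped RealInnerProductSpace
open Filter
open Topology

noncomputable section

lemma mul_t_le {a t n : ℝ} (ha : 0 ≤ a) (ht0 : 0 ≤ t) (ht1 : t ≤ 1) (hn : 0 ≤ n) :
    a * t * n ≤ a * n := by nlinarith [mul_nonneg (mul_nonneg ha hn) (sub_nonneg.mpr ht1)]

lemma sq_sum6 {a b1 b2 b3 b4 b5 b6 : ℝ} (h : a ≤ b1+b2+b3+b4+b5+b6) (ha : 0 ≤ a) :
    a^2 ≤ 6*(b1^2+b2^2+b3^2+b4^2+b5^2+b6^2) := by
  have h1 : a^2 ≤ (b1+b2+b3+b4+b5+b6)^2 := by nlinarith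
  nlinarith [sq_nonneg (b1-b2), sq_nonneg (b1-b3), sq_nonneg (b1-b4), sq_nonneg (b1-b5),
    sq_nonneg (b1-b6), sq_nonneg (b2-b3), sq_nonneg (b2-b4), sq_nonneg (b2-b5), sq_nonneg (b2-b6),
    sq_nonneg (b3-b4), sq_nonneg (b3-b5), sq_nonneg (b3-b6), sq_nonneg (b4-b5), sq_nonneg (b4-b6),
    sq_nonneg (b5-b6)]

lemma norm_six {n : ℕ} (a1 a2 a3 a4 a5 a6 : Euc n) :
    ‖a1 + a2 - a3 + a4 - a5 - a6‖ ≤ ‖a1‖+‖a2‖+‖a3‖+‖a4‖+‖a5‖+‖a6‖ := by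
  have h1 : ‖a1+a2‖ ≤ ‖a1‖+‖a2‖ := norm_add_le _ _
  have h2 : ‖a1+a2-a3‖ ≤ ‖a1+a2‖+‖a3‖ := norm_sub_le _ _
  have h3 : ‖a1+a2-a3+a4‖ ≤ ‖a1+a2-a3‖+‖a4‖ := norm_add_le _ _
  have h4 : ‖a1+a2-a3+a4-a5‖ ≤ ‖a1+a2-a3+a4‖+‖a5‖ := norm_sub_le _ _
  have h5 : ‖a1+a2-a3+a4-a5-a6‖ ≤ ‖a1+a2-a3+a4-a5‖+‖a6‖ := norm_sub_le _ _
  linarith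

lemma sq_expand {n : ℕ} (c d : ℝ) (v w : Euc n) :
    ‖c•v + d•w‖^2 = c^2*‖v‖^2 + 2*(c*d)*⟪v,w⟫ + d^2*‖w‖^2 := by
  rw [norm_add_sq_real, real_inner_smul_left, real_inner_smul_right, norm_smul, norm_smul]
  simp only [Real.norm_eq_abs, mul_pow, sq_abs]
  ring

set_option maxHeartbeats 2000000 in
/-- every cluster point of the primal-dual sequence is a KKT point. -/
theorem stmt12 {n₁ n₂ : ℕ}
    (f : Euc n₁ → ℝ) (g : Euc n₂ → ℝ) (hf : ContDiff ℝ 1 f) (hg : ContDiff ℝ 1 g)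
    (A : Euc n₁ →L[ℝ] Euc n₂) (β : ℝ) (hβ : 0 < β)
    (ν ρ : ℝ) (hν : ν ∈ Set.Ioo (0:ℝ) 1) (hρ : ρ ∈ Set.Ioo (0:ℝ) 1)
    (α : ℝ) (hα : α ∈ Set.Ioo (-1 : ℝ) (1 / ρ - 1))
    (l σ : ℝ) (hl : 0 < l) (hσ : 0 < σ)
    (r s : ℝ) (hrs : r + s ≠ 0)
    (x xt : ℕ → Euc n₁) (y yt : ℕ → Euc n₂) (lam lamh : ℕ → Euc n₂)
    (Hx : ℕ → Euc n₁ →L[ℝ] Euc n₁) (Hy : ℕ → Euc n₂ →L[ℝ] Euc n₂)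
    (hHxsym : ∀ k, IsSelfAdjoint (Hx k)) (hHysym : ∀ k, IsSelfAdjoint (Hy k))
    (hHxpos : ∀ k, ∀ v : Euc n₁, v ≠ 0 → 0 < ⟪v, calHx A β l (Hx k) v⟫)
    (hHypos : ∀ k, ∀ v : Euc n₂, v ≠ 0 → 0 < ⟪v, calHy β σ (Hy k) v⟫)
    (tx ty : ℕ → ℝ) (htx : ∀ k, tx k ∈ Set.Ioc (0:ℝ) 1) (hty : ∀ k, ty k ∈ Set.Ioc (0:ℝ) 1)
    (dx : ℕ → Euc n₁) (dy : ℕ → Euc n₂)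
    (hdx : ∀ k, dx k = (1 + α) • (xt (k+1) - x k))
    (hdy : ∀ k, dy k = (1 + α) • (yt (k+1) - y k))
    (ha : ∀ k, gradient f (x k)
        - (ContinuousLinearMap.adjoint A) (lam k - β • (A (x k) - y k))
        + calHx A β l (Hx k) (xt (k+1) - x k) = 0)
    (hbx : ∀ k, x (k+1) = x k + tx k • dx k)
    (harmx : ∀ k, Lbeta f g A β (x (k+1)) (y k) (lam k)
        ≤ Lbeta f g A β (x k) (y k) (lam k) - ρ * tx k * ⟪dx k, calHx A β l (Hx k) (dx k)⟫)
    (hc : ∀ k, lamh k = lam k - (r * β) • (A (x (k+1)) - y k))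
    (hdg : ∀ k, gradient g (y k) - (lamh k - β • (A (x (k+1)) - y k))
        + calHy β σ (Hy k) (yt (k+1) - y k) = 0)
    (hby : ∀ k, y (k+1) = y k + ty k • dy k)
    (harmy : ∀ k, Lbeta f g A β (x (k+1)) (y (k+1)) (lamh k)
        ≤ Lbeta f g A β (x (k+1)) (y k) (lamh k) - ρ * ty k * ⟪dy k, calHy β σ (Hy k) (dy k)⟫)
    (hlamupd : ∀ k, lam (k+1) = lamh k - (s * β) • (A (x (k+1)) - y (k+1)))
    (hwbdd : ∃ M : ℝ, ∀ k, ‖x k‖ + ‖y k‖ + ‖lam k‖ ≤ M)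
    (ηx ηy : ℝ) (hHxnorm : ∀ k, ‖Hx k‖ ≤ ηx) (hHynorm : ∀ k, ‖Hy k‖ ≤ ηy)
    (η1x η1y : ℝ) (hη1x : 0 < η1x) (hη1y : 0 < η1y)
    (hHxlb : ∀ k, ∀ v : Euc n₁, η1x * ‖v‖ ^ 2 ≤ ⟪v, calHx A β l (Hx k) v⟫)
    (hHylb : ∀ k, ∀ v : Euc n₂, η1y * ‖v‖ ^ 2 ≤ ⟪v, calHy β σ (Hy k) v⟫)
    (Lf Lg : ℝ) (hLf : 0 < Lf) (hLg : 0 < Lg)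
    (hfLip : ∀ k, ∀ t₁ ∈ Set.Icc (0:ℝ) 1, ∀ t₂ ∈ Set.Icc (0:ℝ) 1,
        ‖gradient f (x k + t₁ • dx k) - gradient f (x k + t₂ • dx k)‖
        ≤ Lf * ‖(x k + t₁ • dx k) - (x k + t₂ • dx k)‖)
    (hgLip : ∀ k, ∀ t₁ ∈ Set.Icc (0:ℝ) 1, ∀ t₂ ∈ Set.Icc (0:ℝ) 1,
        ‖gradient g (y k + t₁ • dy k) - gradient g (y k + t₂ • dy k)‖
        ≤ Lg * ‖(y k + t₁ • dy k) - (y k + t₂ • dy k)‖)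
    (nAtA : ℝ) (hnAtA0 : 0 ≤ nAtA)
    (hnAtA : ∀ v : Euc n₁, ‖(ContinuousLinearMap.adjoint A) (A v)‖ ≤ nAtA * ‖v‖)
    (lamMaxAtA : ℝ) (hlamMaxAtA0 : 0 ≤ lamMaxAtA)
    (hlamMaxAtA : ∀ v : Euc n₁, ‖A v‖ ^ 2 ≤ lamMaxAtA * ‖v‖ ^ 2)
    (η2y : ℝ) (hη2ydef : η2y = ηy + β + σ)
    (γ : ℝ) (hγdef : γ = ν * min 1 (min ((1 / (1 + α) - ρ) * η1x / (Lf + β * nAtA))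
        ((1 / (1 + α) - ρ) * η1y / (Lg + β))))
    (htxγ : ∀ k, γ ≤ tx k) (htyγ : ∀ k, γ ≤ ty k)
    (δx δy : ℝ)
    (hδxdef : δx = ρ * γ * η1x - 6 * (1 - s) ^ 2 * β * lamMaxAtA / |r + s|)
    (hδydef : δy = ρ * γ * η1y
        - (6 / (|r + s| * β)) * (Lg ^ 2 + (1 + s ^ 2) * β ^ 2 + 2 * (η2y / (1 + α)) ^ 2)
        - |r * s| * β / |r + s|)
    (hδx : 0 < δx) (hδy : 0 < δy) :
    ∀ p : Euc n₁ × Euc n₂ × Euc n₂,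
      MapClusterPt p atTop (fun k => (x k, y k, lam k)) →
      gradient f p.1 = (ContinuousLinearMap.adjoint A) p.2.2 ∧
      gradient g p.2.1 = p.2.2 ∧ A p.1 = p.2.1 := by

  -- ### Setup and basic positivity facts
  have hα1 : (0:ℝ) < 1 + α := by have := hα.1; linarith
  have hrsabs : (0:ℝ) < |r + s| := abs_pos.mpr hrs
  have hρ0 := hρ.1
  have hγ0 : 0 < γ := by
    have hra : ρ * (1 + α) < 1 := by
      have h2 := hα.2
      have : 1 + α < 1 / ρ := by linarith
      calc ρ * (1 + α) < ρ * (1 / ρ) := by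
            exact (mul_lt_mul_of_pos_left this hρ0)
        _ = 1 := by field_simp
    have hsub : 0 < 1 / (1 + α) - ρ := by
      rw [sub_pos, lt_div_iff₀ hα1]; linarith
    have ht1 : 0 < (1 / (1 + α) - ρ) * η1x / (Lf + β * nAtA) := by
      apply div_pos (mul_pos hsub hη1x)
      nlinarith [mul_nonneg hβ.le hnAtA0]
    have ht2 : 0 < (1 / (1 + α) - ρ) * η1y / (Lg + β) := by
      apply div_pos (mul_pos hsub hη1y); linarith
    rw [hγdef]
    exact mul_pos hν.1 (lt_min one_pos (lt_min ht1 ht2))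
  set Ey : ℝ := η2y / (1 + α) with hEydef
  set c : ℝ := 6 / (|r + s| * β) * (Lg ^ 2 + β ^ 2 + Ey ^ 2) with hcdef
  have hc0 : 0 ≤ c := by
    apply mul_nonneg
    · apply div_nonneg (by norm_num)
      exact mul_nonneg (abs_nonneg _) hβ.le
    · positivity
  -- ### sequences
  set L : ℕ → ℝ := fun k => Lbeta f g A β (x k) (y k) (lam k) with hLdef
  set e : ℕ → Euc n₂ := fun k => A (x (k+1)) - y (k+1) with hedef
  set u : ℕ → Euc n₂ := fun k => A (x (k+1)) - y k with hudef
  have hue : ∀ k, u k = e k + ty k • dy k := by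
    intro k
    simp only [hudef, hedef]
    rw [hby k]
    abel
  have hLchange : ∀ (x0 : Euc n₁) (y0 l0 l1 : Euc n₂),
      Lbeta f g A β x0 y0 l1 = Lbeta f g A β x0 y0 l0 + ⟪l0 - l1, A x0 - y0⟫ := by
    intro x0 y0 l0 l1
    simp only [Lbeta, inner_sub_left]
    ring
  -- ### the "star" identity from step (d)
  have hstar : ∀ j, lam (j+1) = gradient g (y j) + (1+α)⁻¹ • (calHy β σ (Hy j) (dy j))
      + (β * ty j) • dy j + ((1-s)*β) • e j := by
    intro j
    have hyt : yt (j+1) - y j = (1+α)⁻¹ • dy j := by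
      rw [hdy j, smul_smul, inv_mul_cancel₀ hα1.ne', one_smul]
    have h1 := hdg j
    rw [hyt, map_smul] at h1
    have hlamh : lamh j = gradient g (y j) + β • (A (x (j+1)) - y j)
        + (1+α)⁻¹ • (calHy β σ (Hy j)) (dy j) := by
      have h2 : lamh j - (gradient g (y j) + β • (A (x (j+1)) - y j)
          + (1+α)⁻¹ • (calHy β σ (Hy j)) (dy j))
          = -(gradient g (y j) - (lamh j - β • (A (x (j+1)) - y j))
            + (1+α)⁻¹ • (calHy β σ (Hy j)) (dy j)) := by module
      rw [h1, neg_zero] at h2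
      exact sub_eq_zero.mp h2
    simp only [hedef]
    rw [hlamupd j, hlamh, hby j]
    module
  -- ### the lambda-difference identities
  have hDlam : ∀ j, lam j - lam (j+1) = ((r+s)*β) • e j + (r*β*ty j) • dy j := by
    intro j
    simp only [hedef]
    rw [hlamupd j, hc j, hby j]
    module
  have hDl : ∀ k, lam (k+1) - lam (k+2) =
      (gradient g (y k) - gradient g (y (k+1)))
      + (1+α)⁻¹ • (calHy β σ (Hy k) (dy k))
      - (1+α)⁻¹ • (calHy β σ (Hy (k+1)) (dy (k+1)))
      + (β * ty k) • dy k
      - (s * β * ty (k+1)) • dy (k+1)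
      - ((1-s) * β * tx (k+1)) • (A (dx (k+1))) := by
    intro k
    have he2 : e (k+1) = e k + tx (k+1) • A (dx (k+1)) - ty (k+1) • dy (k+1) := by
      simp only [hedef]
      rw [hbx (k+1), hby (k+1), map_add, map_smul]
      abel
    rw [hstar k, hstar (k+1), he2]
    module
  -- ### per-step decrease (C1)
  have hC1 : ∀ j, L (j+1) ≤ L j - ρ*γ*η1x*‖dx j‖^2 - ρ*γ*η1y*‖dy j‖^2
      + (r*β*‖u j‖^2 + s*β*‖e j‖^2) := by
    intro j
    have hx1 := harmx j
    have hy1 := harmy j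
    have hq1 : ρ*γ*η1x*‖dx j‖^2 ≤ ρ * tx j * ⟪dx j, calHx A β l (Hx j) (dx j)⟫ := by
      have h1 := hHxlb j (dx j)
      have h2 := htxγ j
      have h3 : (0:ℝ) ≤ η1x * ‖dx j‖^2 := by positivity
      calc ρ*γ*η1x*‖dx j‖^2 = (ρ*γ)*(η1x*‖dx j‖^2) := by ring
        _ ≤ (ρ*tx j)*(η1x*‖dx j‖^2) := by
            apply mul_le_mul_of_nonneg_right _ h3
            exact mul_le_mul_of_nonneg_left h2 hρ0.le
        _ ≤ (ρ*tx j)*⟪dx j, calHx A β l (Hx j) (dx j)⟫ := by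
            apply mul_le_mul_of_nonneg_left h1
            exact mul_nonneg hρ0.le (le_trans hγ0.le h2)
        _ = ρ * tx j * ⟪dx j, calHx A β l (Hx j) (dx j)⟫ := by ring
    have hq2 : ρ*γ*η1y*‖dy j‖^2 ≤ ρ * ty j * ⟪dy j, calHy β σ (Hy j) (dy j)⟫ := by
      have h1 := hHylb j (dy j)
      have h2 := htyγ j
      have h3 : (0:ℝ) ≤ η1y * ‖dy j‖^2 := by positivity
      calc ρ*γ*η1y*‖dy j‖^2 = (ρ*γ)*(η1y*‖dy j‖^2) := by ring
        _ ≤ (ρ*ty j)*(η1y*‖dy j‖^2) := by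
            apply mul_le_mul_of_nonneg_right _ h3
            exact mul_le_mul_of_nonneg_left h2 hρ0.le
        _ ≤ (ρ*ty j)*⟪dy j, calHy β σ (Hy j) (dy j)⟫ := by
            apply mul_le_mul_of_nonneg_left h1
            exact mul_nonneg hρ0.le (le_trans hγ0.le h2)
        _ = ρ * ty j * ⟪dy j, calHy β σ (Hy j) (dy j)⟫ := by ring
    have hmid : Lbeta f g A β (x (j+1)) (y j) (lamh j)
        = Lbeta f g A β (x (j+1)) (y j) (lam j) + r*β*‖u j‖^2 := by
      rw [hLchange (x (j+1)) (y j) (lam j) (lamh j)]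
      have hll : lam j - lamh j = (r*β) • (A (x (j+1)) - y j) := by
        rw [hc j]; abel
      rw [hll, real_inner_smul_left, real_inner_self_eq_norm_sq]
      try simp only [hudef]
      try ring
    have hfin : L (j+1) = Lbeta f g A β (x (j+1)) (y (j+1)) (lamh j) + s*β*‖e j‖^2 := by
      simp only [hLdef]
      rw [hLchange (x (j+1)) (y (j+1)) (lamh j) (lam (j+1))]
      have hll : lamh j - lam (j+1) = (s*β) • (A (x (j+1)) - y (j+1)) := by
        rw [hlamupd j]; abel
      rw [hll, real_inner_smul_left, real_inner_self_eq_norm_sq]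
      try simp only [hedef]
      try ring
    simp only [hLdef] at hfin ⊢
    linarith
  -- ### norm bounds on the building blocks
  have hcalHyB : ∀ j (v : Euc n₂), ‖calHy β σ (Hy j) v‖ ≤ η2y * ‖v‖ := by
    intro j v
    have h0 : calHy β σ (Hy j) v = Hy j v + (β + σ) • v := by
      simp only [calHy, ContinuousLinearMap.add_apply,
        ContinuousLinearMap.smul_apply, ContinuousLinearMap.one_apply]
    rw [h0]
    have h1 : ‖Hy j v‖ ≤ ηy * ‖v‖ :=
      le_trans ((Hy j).le_opNorm v) (mul_le_mul_of_nonneg_right (hHynorm j) (norm_nonneg v))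
    have h2 : ‖(β + σ) • v‖ = (β + σ) * ‖v‖ := by
      rw [norm_smul, Real.norm_eq_abs, abs_of_pos (by linarith)]
    calc ‖Hy j v + (β + σ) • v‖ ≤ ‖Hy j v‖ + ‖(β + σ) • v‖ := norm_add_le _ _
      _ ≤ ηy * ‖v‖ + (β + σ) * ‖v‖ := by linarith
      _ = η2y * ‖v‖ := by rw [hη2ydef]; ring
  have hEyB : ∀ j (v : Euc n₂), ‖(1+α)⁻¹ • (calHy β σ (Hy j) v)‖ ≤ Ey * ‖v‖ := by
    intro j v
    rw [norm_smul, Real.norm_eq_abs, abs_of_pos (inv_pos.mpr hα1)]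
    calc (1+α)⁻¹ * ‖calHy β σ (Hy j) v‖ ≤ (1+α)⁻¹ * (η2y * ‖v‖) :=
          mul_le_mul_of_nonneg_left (hcalHyB j v) (inv_pos.mpr hα1).le
      _ = Ey * ‖v‖ := by rw [hEydef]; ring
  have hΔbound : ∀ k, ‖lam (k+1) - lam (k+2)‖ ≤ Lg*‖dy k‖ + Ey*‖dy k‖ + Ey*‖dy (k+1)‖
      + β*‖dy k‖ + |s| * β*‖dy (k+1)‖ + |1 - s| * β*‖A (dx (k+1))‖ := by
    intro k
    rw [hDl k]
    refine le_trans (norm_six _ _ _ _ _ _) ?_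
    have hb1 : ‖gradient g (y k) - gradient g (y (k+1))‖ ≤ Lg*‖dy k‖ := by
      have h := hgLip k 0 ⟨le_rfl, zero_le_one⟩ (ty k) ⟨(hty k).1.le, (hty k).2⟩
      rw [zero_smul, add_zero] at h
      rw [← hby k] at h
      have hnn : ‖y k - y (k+1)‖ = ty k * ‖dy k‖ := by
        rw [hby k, sub_add_cancel_left, norm_neg, norm_smul, Real.norm_eq_abs,
          abs_of_pos (hty k).1]
      rw [hnn] at h
      calc ‖gradient g (y k) - gradient g (y (k+1))‖ ≤ Lg * (ty k * ‖dy k‖) := h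
        _ = Lg * ty k * ‖dy k‖ := by ring
        _ ≤ Lg*‖dy k‖ := mul_t_le hLg.le (hty k).1.le (hty k).2 (norm_nonneg _)
    have hb2 := hEyB k (dy k)
    have hb3 := hEyB (k+1) (dy (k+1))
    have hb4 : ‖(β * ty k) • dy k‖ ≤ β*‖dy k‖ := by
      rw [norm_smul, Real.norm_eq_abs, abs_of_pos (mul_pos hβ (hty k).1)]
      exact mul_t_le hβ.le (hty k).1.le (hty k).2 (norm_nonneg _)
    have hb5 : ‖(s * β * ty (k+1)) • dy (k+1)‖ ≤ |s| * β*‖dy (k+1)‖ := by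
      rw [norm_smul, Real.norm_eq_abs, abs_mul, abs_mul, abs_of_pos hβ,
        abs_of_pos (hty (k+1)).1]
      calc |s| * β * ty (k+1) * ‖dy (k+1)‖ = (|s| * β) * ty (k+1) * ‖dy (k+1)‖ := by ring
        _ ≤ (|s| * β) * ‖dy (k+1)‖ := mul_t_le (by positivity) (hty (k+1)).1.le (hty (k+1)).2
            (norm_nonneg _)
        _ = |s| * β*‖dy (k+1)‖ := by ring
    have hb6 : ‖((1-s) * β * tx (k+1)) • (A (dx (k+1)))‖ ≤ |1 - s| * β*‖A (dx (k+1))‖ := by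
      rw [norm_smul, Real.norm_eq_abs, abs_mul, abs_mul, abs_of_pos hβ,
        abs_of_pos (htx (k+1)).1]
      calc |1 - s| * β * tx (k+1) * ‖A (dx (k+1))‖
          = (|1 - s| * β) * tx (k+1) * ‖A (dx (k+1))‖ := by ring
        _ ≤ (|1 - s| * β) * ‖A (dx (k+1))‖ := mul_t_le (by positivity) (htx (k+1)).1.le
            (htx (k+1)).2 (norm_nonneg _)
        _ = |1 - s| * β*‖A (dx (k+1))‖ := by ring
    linarith
  have hDlamsq : ∀ k, ‖lam (k+1) - lam (k+2)‖^2
      ≤ 6*((Lg^2 + Ey^2 + β^2)*‖dy k‖^2 + (Ey^2 + s^2*β^2)*‖dy (k+1)‖^2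
        + (1-s)^2 * β^2*(lamMaxAtA*‖dx (k+1)‖^2)) := by
    intro k
    have h := sq_sum6 (hΔbound k) (norm_nonneg _)
    have h6 : (|1 - s| * β*‖A (dx (k+1))‖)^2 ≤ (1-s)^2 * β^2*(lamMaxAtA*‖dx (k+1)‖^2) := by
      have hA := hlamMaxAtA (dx (k+1))
      have : (|1 - s| * β*‖A (dx (k+1))‖)^2 = (1-s)^2 * β^2*‖A (dx (k+1))‖^2 := by
        rw [mul_pow, mul_pow, sq_abs]
      rw [this]
      apply mul_le_mul_of_nonneg_left hA (by positivity)
    have e1 : (Lg*‖dy k‖)^2 = Lg^2*‖dy k‖^2 := by rw [mul_pow]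
    have e2 : (Ey*‖dy k‖)^2 = Ey^2*‖dy k‖^2 := by rw [mul_pow]
    have e3 : (Ey*‖dy (k+1)‖)^2 = Ey^2*‖dy (k+1)‖^2 := by rw [mul_pow]
    have e4 : (β*‖dy k‖)^2 = β^2*‖dy k‖^2 := by rw [mul_pow]
    have e5 : (|s| * β*‖dy (k+1)‖)^2 = s^2*β^2*‖dy (k+1)‖^2 := by
      rw [mul_pow, mul_pow, sq_abs]
    rw [e1, e2, e3, e4, e5] at h
    linarith
  -- ### dual increase bound (C2)
  have hC2 : ∀ k, r*β*‖u (k+1)‖^2 + s*β*‖e (k+1)‖^2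
      ≤ (6/(|r + s| * β))*(Lg^2+β^2+Ey^2)*‖dy k‖^2
        + (6/(|r + s| * β))*(s^2*β^2+Ey^2)*‖dy (k+1)‖^2
        + (6/(|r + s| * β))*((1-s)^2 * β^2*lamMaxAtA)*‖dx (k+1)‖^2
        + (|r * s| * β/ |r + s|)*‖dy (k+1)‖^2 := by
    intro k
    have hu2 : ‖u (k+1)‖^2 = ‖e (k+1)‖^2 + 2*(ty (k+1))*⟪e (k+1), dy (k+1)⟫
        + (ty (k+1))^2*‖dy (k+1)‖^2 := by
      rw [hue (k+1), norm_add_sq_real, real_inner_smul_right, norm_smul, Real.norm_eq_abs,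
        mul_pow, sq_abs]
      ring
    have hΔ2 : ‖lam (k+1) - lam (k+2)‖^2 = ((r+s)*β)^2*‖e (k+1)‖^2
        + 2*(((r+s)*β)*(r*β*ty (k+1)))*⟪e (k+1), dy (k+1)⟫
        + (r*β*ty (k+1))^2*‖dy (k+1)‖^2 := by
      rw [hDlam (k+1)]
      exact sq_expand _ _ _ _
    have hkey : (r+s)*β*(r*β*‖u (k+1)‖^2 + s*β*‖e (k+1)‖^2)
        = ‖lam (k+1) - lam (k+2)‖^2 + r*s*β^2*((ty (k+1))^2*‖dy (k+1)‖^2) := by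
      rw [hu2, hΔ2]; ring
    have hty1 : (ty (k+1))^2*‖dy (k+1)‖^2 ≤ ‖dy (k+1)‖^2 := by
      have ht2 : (ty (k+1))^2 ≤ 1 := by nlinarith [(hty (k+1)).1, (hty (k+1)).2]
      have h := mul_le_mul_of_nonneg_right ht2 (sq_nonneg ‖dy (k+1)‖)
      linarith
    have hP : (0:ℝ) ≤ (ty (k+1))^2*‖dy (k+1)‖^2 := by positivity
    have habs : |r + s| * β*(r*β*‖u (k+1)‖^2 + s*β*‖e (k+1)‖^2)
        ≤ ‖lam (k+1) - lam (k+2)‖^2 + |r * s| * β^2*‖dy (k+1)‖^2 := by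
      have hA1 : r*s*(β^2*((ty (k+1))^2*‖dy (k+1)‖^2))
          ≤ |r * s| * (β^2*((ty (k+1))^2*‖dy (k+1)‖^2)) :=
        mul_le_mul_of_nonneg_right (le_abs_self _) (by positivity)
      have hA1' : (-(r*s))*(β^2*((ty (k+1))^2*‖dy (k+1)‖^2))
          ≤ |r * s| * (β^2*((ty (k+1))^2*‖dy (k+1)‖^2)) :=
        mul_le_mul_of_nonneg_right (neg_le_abs _) (by positivity)
      have hA2 : |r * s| * (β^2*((ty (k+1))^2*‖dy (k+1)‖^2)) ≤ |r * s| * (β^2*‖dy (k+1)‖^2) :=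
        mul_le_mul_of_nonneg_left (mul_le_mul_of_nonneg_left hty1 (sq_nonneg β)) (abs_nonneg _)
      rcases abs_cases (r+s) with ⟨h1, _⟩ | ⟨h1, _⟩
      · rw [h1]
        nlinarith [hkey]
      · rw [h1]
        nlinarith [hkey, sq_nonneg ‖lam (k+1) - lam (k+2)‖]
    have hpos : 0 < |r + s| * β := mul_pos hrsabs hβ
    have hRHS : (6/(|r + s| * β))*(Lg^2+β^2+Ey^2)*‖dy k‖^2
        + (6/(|r + s| * β))*(s^2*β^2+Ey^2)*‖dy (k+1)‖^2
        + (6/(|r + s| * β))*((1-s)^2 * β^2*lamMaxAtA)*‖dx (k+1)‖^2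
        + (|r * s| * β/ |r + s|)*‖dy (k+1)‖^2
        = (6*((Lg^2 + Ey^2 + β^2)*‖dy k‖^2 + (Ey^2 + s^2*β^2)*‖dy (k+1)‖^2
          + (1-s)^2 * β^2*(lamMaxAtA*‖dx (k+1)‖^2)) + |r * s| * β^2*‖dy (k+1)‖^2)/(|r + s| * β) := by
      field_simp
      ring
    rw [hRHS, le_div_iff₀ hpos]
    calc (r*β*‖u (k+1)‖^2 + s*β*‖e (k+1)‖^2)*(|r + s| * β)
        = |r + s| * β*(r*β*‖u (k+1)‖^2 + s*β*‖e (k+1)‖^2) := by ring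
      _ ≤ ‖lam (k+1) - lam (k+2)‖^2 + |r * s| * β^2*‖dy (k+1)‖^2 := habs
      _ ≤ 6*((Lg^2 + Ey^2 + β^2)*‖dy k‖^2 + (Ey^2 + s^2*β^2)*‖dy (k+1)‖^2
          + (1-s)^2 * β^2*(lamMaxAtA*‖dx (k+1)‖^2)) + |r * s| * β^2*‖dy (k+1)‖^2 := by
            linarith [hDlamsq k]
  -- ### merit function and telescoping
  set Mer : ℕ → ℝ := fun k => L (k+1) + c*‖dy k‖^2 with hMerdef
  have hmer : ∀ k, Mer (k+1) + (δx*‖dx (k+1)‖^2 + δy*‖dy (k+1)‖^2) ≤ Mer k := by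
    intro k
    have h1 := hC1 (k+1)
    have h2 := hC2 k
    have hδxe : δx*‖dx (k+1)‖^2 = ρ*γ*η1x*‖dx (k+1)‖^2
        - (6/(|r + s| * β))*((1-s)^2 * β^2*lamMaxAtA)*‖dx (k+1)‖^2 := by
      have hx6 : (6/(|r + s| * β))*((1-s)^2 * β^2*lamMaxAtA) = 6*(1-s)^2*β*lamMaxAtA/ |r + s| := by
        field_simp
      rw [hδxdef, hx6]
      ring
    have hδye : δy*‖dy (k+1)‖^2 = ρ*γ*η1y*‖dy (k+1)‖^2
        - c*‖dy (k+1)‖^2 - (6/(|r + s| * β))*(s^2*β^2+Ey^2)*‖dy (k+1)‖^2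
        - (|r * s| * β/ |r + s|)*‖dy (k+1)‖^2 := by
      rw [hδydef, hcdef]
      ring
    simp only [hMerdef]
    have hcnote : c*‖dy k‖^2 = (6/(|r + s| * β))*(Lg^2+β^2+Ey^2)*‖dy k‖^2 := by
      rw [hcdef]; try ring
    linarith
  obtain ⟨M0, hM0⟩ := hwbdd
  have hLlb : ∃ m : ℝ, ∀ k, m ≤ L k := by
    have hM0' : ∀ k, ‖x k‖ ≤ M0 ∧ ‖y k‖ ≤ M0 ∧ ‖lam k‖ ≤ M0 := by
      intro k
      have h := hM0 k
      have n1 := norm_nonneg (x k); have n2 := norm_nonneg (y k); have n3 := norm_nonneg (lam k)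
      exact ⟨by linarith, by linarith, by linarith⟩
    have hM0nn : (0:ℝ) ≤ M0 := le_trans (norm_nonneg (x 0)) (hM0' 0).1
    have hKc : IsCompact (Metric.closedBall (0 : Euc n₁ × Euc n₂ × Euc n₂) M0) :=
      isCompact_closedBall _ _
    have hcont : Continuous (fun q : Euc n₁ × Euc n₂ × Euc n₂ =>
        Lbeta f g A β q.1 q.2.1 q.2.2) := by
      unfold Lbeta
      apply Continuous.add
      · apply Continuous.sub
        · exact (hf.continuous.comp continuous_fst).add
            (hg.continuous.comp (continuous_fst.comp continuous_snd))
        · exact Continuous.inner (continuous_snd.comp continuous_snd)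
            ((A.continuous.comp continuous_fst).sub (continuous_fst.comp continuous_snd))
      · exact (continuous_const.mul
          ((((A.continuous.comp continuous_fst).sub
            (continuous_fst.comp continuous_snd)).norm).pow 2))
    have hne : (0 : Euc n₁ × Euc n₂ × Euc n₂) ∈ Metric.closedBall 0 M0 := by
      simp [hM0nn]
    obtain ⟨z, hzK, hzmin⟩ := hKc.exists_isMinOn ⟨0, hne⟩ hcont.continuousOn
    refine ⟨Lbeta f g A β z.1 z.2.1 z.2.2, fun k => ?_⟩
    have hmem : ((x k, y k, lam k) : Euc n₁ × Euc n₂ × Euc n₂) ∈ Metric.closedBall 0 M0 := by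
      rw [Metric.mem_closedBall, dist_zero_right]
      have := hM0' k
      simp only [Prod.norm_def]
      exact max_le this.1 (max_le this.2.1 this.2.2)
    exact hzmin hmem
  obtain ⟨m, hm⟩ := hLlb
  have hMerlb : ∀ k, m ≤ Mer k := by
    intro k
    have h1 := hm (k+1)
    have h2 : (0:ℝ) ≤ c*‖dy k‖^2 := mul_nonneg hc0 (sq_nonneg _)
    simp only [hMerdef]
    linarith
  set T : ℕ → ℝ := fun k => δx*‖dx (k+1)‖^2 + δy*‖dy (k+1)‖^2 with hTdef
  have hTnn : ∀ k, 0 ≤ T k := by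
    intro k
    simp only [hTdef]
    have := mul_nonneg hδx.le (sq_nonneg ‖dx (k+1)‖)
    have := mul_nonneg hδy.le (sq_nonneg ‖dy (k+1)‖)
    linarith
  have htel : ∀ N, Mer N + ∑ k ∈ Finset.range N, T k ≤ Mer 0 := by
    intro N
    induction N with
    | zero => simp
    | succ N ih =>
      rw [Finset.sum_range_succ]
      have := hmer N
      simp only [hTdef] at *
      linarith
  have hsum : ∀ N, ∑ k ∈ Finset.range N, T k ≤ Mer 0 - m := by
    intro N
    have := htel N
    have := hMerlb N
    linarith
  have hsummable : Summable T := summable_of_sum_range_le hTnn hsum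
  have hT0 : Tendsto T atTop (𝓝 0) := hsummable.tendsto_atTop_zero
  -- ### dx, dy tend to 0
  have hsqz : ∀ (δ : ℝ) (hδ : 0 < δ) (d : ℕ → ℝ),
      (∀ k, 0 ≤ d k) → (∀ k, δ * (d k)^2 ≤ T k) → Tendsto d atTop (𝓝 0) := by
    intro δ hδ d hdnn hdle
    have h1 : Tendsto (fun k => δ * (d k)^2) atTop (𝓝 0) :=
      squeeze_zero (fun k => by positivity) hdle hT0
    have h2 : Tendsto (fun k => (d k)^2) atTop (𝓝 0) := by
      have h3 := h1.const_mul δ⁻¹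
      rw [mul_zero] at h3
      refine h3.congr (fun k => ?_)
      field_simp
    have h3 : Tendsto (fun k => Real.sqrt ((d k)^2)) atTop (𝓝 (Real.sqrt 0)) :=
      (Real.continuous_sqrt.tendsto _).comp h2
    rw [Real.sqrt_zero] at h3
    refine h3.congr (fun k => Real.sqrt_sq (hdnn k))
  have hndx1 : Tendsto (fun k => ‖dx (k+1)‖) atTop (𝓝 0) := by
    refine hsqz δx hδx _ (fun k => norm_nonneg _) (fun k => ?_)
    simp only [hTdef]
    nlinarith [mul_nonneg hδy.le (sq_nonneg ‖dy (k+1)‖)]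
  have hndy1 : Tendsto (fun k => ‖dy (k+1)‖) atTop (𝓝 0) := by
    refine hsqz δy hδy _ (fun k => norm_nonneg _) (fun k => ?_)
    simp only [hTdef]
    nlinarith [mul_nonneg hδx.le (sq_nonneg ‖dx (k+1)‖)]
  have hndx : Tendsto (fun k => ‖dx k‖) atTop (𝓝 0) := (tendsto_add_atTop_iff_nat 1).mp hndx1
  have hndy : Tendsto (fun k => ‖dy k‖) atTop (𝓝 0) := (tendsto_add_atTop_iff_nat 1).mp hndy1
  have hdx0 : Tendsto dx atTop (𝓝 0) := tendsto_zero_iff_norm_tendsto_zero.mpr hndx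
  have hdy0 : Tendsto dy atTop (𝓝 0) := tendsto_zero_iff_norm_tendsto_zero.mpr hndy
  -- ### lambda differences and residuals tend to 0
  have hnAdx1 : Tendsto (fun k => ‖A (dx (k+1))‖) atTop (𝓝 0) := by
    refine squeeze_zero (fun k => norm_nonneg _) (fun k => A.le_opNorm (dx (k+1))) ?_
    have := hndx1.const_mul ‖A‖
    simpa using this
  have hDlam0 : Tendsto (fun k => lam (k+1) - lam (k+2)) atTop (𝓝 0) := by
    apply squeeze_zero_norm hΔbound
    have t1 := hndy.const_mul Lg
    have t2 := hndy.const_mul Ey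
    have t3 := hndy1.const_mul Ey
    have t4 := hndy.const_mul β
    have t5 := hndy1.const_mul (|s| * β)
    have t6 := hnAdx1.const_mul (|1 - s| * β)
    have := ((((t1.add t2).add t3).add t4).add t5).add t6
    simpa [mul_assoc] using this
  have he1 : Tendsto (fun k => e (k+1)) atTop (𝓝 0) := by
    have hne' : (r+s)*β ≠ 0 := mul_ne_zero hrs hβ.ne'
    have heshift : ∀ k, e (k+1) = ((r+s)*β)⁻¹ •
        ((lam (k+1) - lam (k+2)) - (r*β*ty (k+1)) • dy (k+1)) := by
      intro k
      rw [hDlam (k+1), add_sub_cancel_right, inv_smul_smul₀ hne']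
    have h2' : Tendsto (fun k => (r*β*ty (k+1)) • dy (k+1)) atTop (𝓝 0) := by
      apply squeeze_zero_norm (a := fun k => |r| * β*‖dy (k+1)‖)
      · intro k
        rw [norm_smul, Real.norm_eq_abs, abs_mul, abs_mul, abs_of_pos hβ,
          abs_of_pos (hty (k+1)).1]
        calc |r| * β * ty (k+1) * ‖dy (k+1)‖ = (|r| * β) * ty (k+1) * ‖dy (k+1)‖ := by ring
          _ ≤ (|r| * β) * ‖dy (k+1)‖ := mul_t_le (by positivity) (hty (k+1)).1.le
              (hty (k+1)).2 (norm_nonneg _)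
          _ = |r| * β*‖dy (k+1)‖ := by ring
      · simpa [mul_assoc] using hndy1.const_mul (|r| * β)
    have h1 : Tendsto (fun k => (lam (k+1) - lam (k+2)) - (r*β*ty (k+1)) • dy (k+1))
        atTop (𝓝 0) := by
      have := hDlam0.sub h2'
      simpa using this
    have h3 := h1.const_smul (((r+s)*β)⁻¹)
    rw [smul_zero] at h3
    exact h3.congr (fun k => (heshift k).symm)
  have he0 : Tendsto e atTop (𝓝 0) := (tendsto_add_atTop_iff_nat 1).mp he1
  have htydy0 : Tendsto (fun k => ty k • dy k) atTop (𝓝 0) := by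
    apply squeeze_zero_norm (a := fun k => ‖dy k‖)
    · intro k
      rw [norm_smul, Real.norm_eq_abs, abs_of_pos (hty k).1]
      have h := mul_le_mul_of_nonneg_right (hty k).2 (norm_nonneg (dy k))
      linarith
    · exact hndy
  have hu0 : Tendsto u atTop (𝓝 0) := by
    have := he0.add htydy0
    rw [add_zero] at this
    exact this.congr (fun k => (hue k).symm)
  have hh0 : Tendsto (fun k => A (x k) - y k) atTop (𝓝 0) := by
    apply (tendsto_add_atTop_iff_nat 1).mp
    rw [hedef] at he0
    exact he0
  -- ### gradient residuals tend to 0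
  have hcalHxB : ∀ k (v : Euc n₁), ‖calHx A β l (Hx k) v‖ ≤ (ηx + β*nAtA + l)*‖v‖ := by
    intro k v
    have h0 : calHx A β l (Hx k) v
        = Hx k v + β • (ContinuousLinearMap.adjoint A) (A v) + l • v := by
      simp only [calHx, ContinuousLinearMap.add_apply,
        ContinuousLinearMap.smul_apply, ContinuousLinearMap.one_apply,
        ContinuousLinearMap.comp_apply]
    rw [h0]
    have h1 : ‖Hx k v‖ ≤ ηx * ‖v‖ :=
      le_trans ((Hx k).le_opNorm v) (mul_le_mul_of_nonneg_right (hHxnorm k) (norm_nonneg v))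
    have h2 : ‖β • (ContinuousLinearMap.adjoint A) (A v)‖ ≤ β * (nAtA * ‖v‖) := by
      rw [norm_smul, Real.norm_eq_abs, abs_of_pos hβ]
      exact mul_le_mul_of_nonneg_left (hnAtA v) hβ.le
    have h3 : ‖l • v‖ = l * ‖v‖ := by
      rw [norm_smul, Real.norm_eq_abs, abs_of_pos hl]
    calc ‖Hx k v + β • (ContinuousLinearMap.adjoint A) (A v) + l • v‖
        ≤ ‖Hx k v + β • (ContinuousLinearMap.adjoint A) (A v)‖ + ‖l • v‖ := norm_add_le _ _
      _ ≤ (‖Hx k v‖ + ‖β • (ContinuousLinearMap.adjoint A) (A v)‖) + ‖l • v‖ := by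
          have := norm_add_le (Hx k v) (β • (ContinuousLinearMap.adjoint A) (A v))
          linarith
      _ ≤ (ηx + β*nAtA + l)*‖v‖ := by rw [h3]; nlinarith [norm_nonneg v]
  have hPhi : ∀ k, gradient f (x k) - (ContinuousLinearMap.adjoint A) (lam k)
      = -(β • ((ContinuousLinearMap.adjoint A) (A (x k) - y k)))
        - (1+α)⁻¹ • (calHx A β l (Hx k) (dx k)) := by
    intro k
    have h1 := ha k
    have hxt : xt (k+1) - x k = (1+α)⁻¹ • dx k := by
      rw [hdx k, smul_smul, inv_mul_cancel₀ hα1.ne', one_smul]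
    rw [hxt, map_smul, map_sub, map_smul] at h1
    have h2 : (gradient f (x k) - (ContinuousLinearMap.adjoint A) (lam k))
        - (-(β • ((ContinuousLinearMap.adjoint A) (A (x k) - y k)))
          - (1+α)⁻¹ • (calHx A β l (Hx k) (dx k)))
        = gradient f (x k) - ((ContinuousLinearMap.adjoint A) (lam k)
          - β • (ContinuousLinearMap.adjoint A) (A (x k) - y k))
          + (1+α)⁻¹ • (calHx A β l (Hx k)) (dx k) := by module
    rw [h1] at h2
    exact sub_eq_zero.mp h2
  have hΦtend : Tendsto (fun k => gradient f (x k)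
      - (ContinuousLinearMap.adjoint A) (lam k)) atTop (𝓝 0) := by
    have p1 : Tendsto (fun k => -(β • ((ContinuousLinearMap.adjoint A) (A (x k) - y k))))
        atTop (𝓝 0) := by
      have h1 : Tendsto (fun k => (ContinuousLinearMap.adjoint A) (A (x k) - y k))
          atTop (𝓝 0) := by
        have h2 := ((ContinuousLinearMap.adjoint A).continuous.tendsto 0).comp hh0
        rw [map_zero] at h2
        exact h2
      have := (h1.const_smul β).neg
      simpa using this
    have p2 : Tendsto (fun k => (1+α)⁻¹ • (calHx A β l (Hx k) (dx k))) atTop (𝓝 0) := by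
      apply squeeze_zero_norm (a := fun k => (1+α)⁻¹ * ((ηx + β*nAtA + l)*‖dx k‖))
      · intro k
        rw [norm_smul, Real.norm_eq_abs, abs_of_pos (inv_pos.mpr hα1)]
        exact mul_le_mul_of_nonneg_left (hcalHxB k (dx k)) (inv_pos.mpr hα1).le
      · have := hndx.const_mul ((1+α)⁻¹ * (ηx + β*nAtA + l))
        simpa [mul_assoc] using this
    have := p1.sub p2
    rw [sub_zero] at this
    exact this.congr (fun k => (hPhi k).symm)
  have hΨtend : Tendsto (fun k => gradient g (y k) - lam k) atTop (𝓝 0) := by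
    have hPsi : ∀ k, gradient g (y k) - lam k = (lam (k+1) - lam k)
        - (1+α)⁻¹ • (calHy β σ (Hy k) (dy k)) - (β*ty k) • dy k - ((1-s)*β) • e k := by
      intro k
      rw [hstar k]
      module
    have hlamdiff : Tendsto (fun k => lam (k+1) - lam k) atTop (𝓝 0) := by
      have hld : ∀ k, lam (k+1) - lam k = -((r*β) • u k) - (s*β) • e k := by
        intro k
        simp only [hudef, hedef]
        rw [hlamupd k, hc k]
        module
      have := ((hu0.const_smul (r*β)).neg).sub (he0.const_smul (s*β))
      simp only [smul_zero, neg_zero, sub_zero] at this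
      exact this.congr (fun k => (hld k).symm)
    have p2 : Tendsto (fun k => (1+α)⁻¹ • (calHy β σ (Hy k) (dy k))) atTop (𝓝 0) := by
      apply squeeze_zero_norm (a := fun k => Ey * ‖dy k‖)
      · exact fun k => hEyB k (dy k)
      · simpa using hndy.const_mul Ey
    have p3 : Tendsto (fun k => (β*ty k) • dy k) atTop (𝓝 0) := by
      apply squeeze_zero_norm (a := fun k => β*‖dy k‖)
      · intro k
        rw [norm_smul, Real.norm_eq_abs, abs_of_pos (mul_pos hβ (hty k).1)]
        exact mul_t_le hβ.le (hty k).1.le (hty k).2 (norm_nonneg _)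
      · simpa using hndy.const_mul β
    have p4 : Tendsto (fun k => ((1-s)*β) • e k) atTop (𝓝 0) := by
      have := he0.const_smul ((1-s)*β)
      simpa using this
    have := ((hlamdiff.sub p2).sub p3).sub p4
    simp only [sub_zero] at this
    exact this.congr (fun k => (hPsi k).symm)
  -- ### conclusion at cluster points
  intro p hp
  obtain ⟨φ, hφm, hφt⟩ := TopologicalSpace.FirstCountableTopology.tendsto_subseq hp
  have hxφ : Tendsto (fun j => x (φ j)) atTop (𝓝 p.1) :=
    (continuous_fst.tendsto p).comp hφt
  have hyφ : Tendsto (fun j => y (φ j)) atTop (𝓝 p.2.1) :=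
    (continuous_fst.tendsto p.2).comp ((continuous_snd.tendsto p).comp hφt)
  have hlφ : Tendsto (fun j => lam (φ j)) atTop (𝓝 p.2.2) :=
    (continuous_snd.tendsto p.2).comp ((continuous_snd.tendsto p).comp hφt)
  have hφatTop := hφm.tendsto_atTop
  have hcontgradf : Continuous (gradient f) := by
    have h1 : Continuous (fderiv ℝ f) := hf.continuous_fderiv one_ne_zero
    exact ((InnerProductSpace.toDual ℝ (Euc n₁)).symm.continuous).comp h1
  have hcontgradg : Continuous (gradient g) := by
    have h1 : Continuous (fderiv ℝ g) := hg.continuous_fderiv one_ne_zero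
    exact ((InnerProductSpace.toDual ℝ (Euc n₂)).symm.continuous).comp h1
  refine ⟨?_, ?_, ?_⟩
  · have h1 : Tendsto (fun j => gradient f (x (φ j))
        - (ContinuousLinearMap.adjoint A) (lam (φ j))) atTop
        (𝓝 (gradient f p.1 - (ContinuousLinearMap.adjoint A) p.2.2)) :=
      ((hcontgradf.tendsto _).comp hxφ).sub
        (((ContinuousLinearMap.adjoint A).continuous.tendsto _).comp hlφ)
    have h2 : Tendsto (fun j => gradient f (x (φ j))
        - (ContinuousLinearMap.adjoint A) (lam (φ j))) atTop (𝓝 0) := hΦtend.comp hφatTop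
    exact sub_eq_zero.mp (tendsto_nhds_unique h1 h2)
  · have h1 : Tendsto (fun j => gradient g (y (φ j)) - lam (φ j)) atTop
        (𝓝 (gradient g p.2.1 - p.2.2)) :=
      ((hcontgradg.tendsto _).comp hyφ).sub hlφ
    have h2 : Tendsto (fun j => gradient g (y (φ j)) - lam (φ j)) atTop (𝓝 0) :=
      hΨtend.comp hφatTop
    exact sub_eq_zero.mp (tendsto_nhds_unique h1 h2)
  · have h1 : Tendsto (fun j => A (x (φ j)) - y (φ j)) atTop (𝓝 (A p.1 - p.2.1)) :=
      ((A.continuous.tendsto _).comp hxφ).sub hyφ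
    have h2 : Tendsto (fun j => A (x (φ j)) - y (φ j)) atTop (𝓝 0) := hh0.comp hφatTop
    exact sub_eq_zero.mp (tendsto_nhds_unique h1 h2)


end
end
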